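/- Let f(x,y) = 2xy, let Δz ∈ ℝ, let p₁, p₂, p₃ ∈ ℝ² with pᵢ = (xᵢ, yᵢ), let T be their convex hull, and let ℓ be an affine function on ℝ² with ℓ(pᵢ) = f(pᵢ) + Δz for i = 1,2,3. Then the supremum of |ℓ(x,y) − f(x,y)| over (x,y) ∈ T equals max{ |Δz| , |Δz + (x₁−x₂)(y₁−y₂)/2| , |Δz + (x₂−x₃)(y₂−y₃)/2| , |Δz + (x₁−x₃)(y₁−y₃)/2| }. -/

import Mathlib

/-!
Along a horizontal line the saddle `2xy` is affine in `x`, so the error `ℓ - 2xy` is affine on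
every horizontal chord of the triangle and its absolute value is bounded by the values at the two
endpoints of the chord, which lie on the edges. Every point of the triangle lies on such a chord:
move its barycentric coordinates along a nonzero direction that keeps both the total weight and
the `y`-coordinate fixed, in both senses, until a coordinate vanishes. At `a • pᵢ + b • pⱼ` on an
edge the error is `Δz + 4ab · (xᵢ - xⱼ)(yᵢ - yⱼ)/2`, which lies between `Δz` (a vertex) and the
value at the midpoint of the edge.
-/

open Finset

section

variable {ι : Type*} [Fintype ι]

lemma exists_ne_zero_sum_eq_zero_map_eq_zero (hι : 2 < Fintype.card ι)
    (φ : (ι → ℝ) →ₗ[ℝ] ℝ) : ∃ d ≠ 0, ∑ i, d i = 0 ∧ φ d = 0 := by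
  let F := (∑ i, LinearMap.proj (R := ℝ) (φ := fun _ : ι => ℝ) i).prod φ
  obtain ⟨d, hd, hd0⟩ := Submodule.exists_mem_ne_zero_of_ne_bot <|
    F.ker_ne_bot_of_finrank_lt (by simpa using hι)
  obtain ⟨hsum, hφ⟩ := Prod.mk_eq_zero.1 (LinearMap.mem_ker.1 hd)
  exact ⟨d, hd0, by simpa using hsum, hφ⟩

lemma exists_neg_of_sum_eq_zero {d : ι → ℝ} (hsum : ∑ i, d i = 0) (hd : d ≠ 0) :
    ∃ i, d i < 0 := by
  by_contra! h
  exact hd (funext fun i => (sum_eq_zero_iff_of_nonneg fun i _ => h i).1 hsum i (mem_univ i))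

lemma exists_nonneg_add_smul_eq_zero {x d : ι → ℝ} (hx : 0 ≤ x)
    (hd : ∃ i, d i < 0) : ∃ t : ℝ, 0 ≤ t ∧ 0 ≤ x + t • d ∧ ∃ i, x i + t * d i = 0 := by
  classical
  obtain ⟨i, hi, hmin⟩ := (univ.filter (d · < 0)).exists_min_image (fun i => x i / -d i)
    (by simpa [Finset.filter_nonempty_iff] using hd)
  have hi : 0 < -d i := by simpa using hi
  have hi' : d i ≠ 0 := (neg_pos.1 hi).ne
  refine ⟨x i / -d i, div_nonneg (hx i) hi.le, fun j => ?_, i, by field_simp; ring⟩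
  simp only [Pi.add_apply, Pi.smul_apply, smul_eq_mul, Pi.zero_apply]
  rcases lt_or_ge (d j) 0 with hj | hj
  · have := (le_div_iff₀ (neg_pos.2 hj)).1 (hmin j (by simpa using hj))
    linarith
  · exact add_nonneg (hx j) (mul_nonneg (div_nonneg (hx i) hi.le) hj)

lemma exists_add_smul_mem_stdSimplex_eq_zero {w d : ι → ℝ}
    (hw : w ∈ stdSimplex ℝ ι) (hsum : ∑ i, d i = 0) (hd : d ≠ 0) :
    ∃ t : ℝ, 0 ≤ t ∧ w + t • d ∈ stdSimplex ℝ ι ∧ ∃ k, (w + t • d) k = 0 := by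
  obtain ⟨t, ht, hnonneg, k, hk⟩ :=
    exists_nonneg_add_smul_eq_zero (fun i => hw.1 i) (exists_neg_of_sum_eq_zero hsum hd)
  refine ⟨t, ht, ⟨hnonneg, ?_⟩, k, hk⟩
  simp [sum_add_distrib, ← mul_sum, hsum, hw.2]

variable {E : Type*} [AddCommGroup E] [Module ℝ E]

lemma exists_mem_stdSimplex_sum_smul_eq {P : ι → E} {q : E}
    (hq : q ∈ convexHull ℝ (Set.range P)) : ∃ w ∈ stdSimplex ℝ ι, ∑ i, w i • P i = q := by
  classical
  have hP : Set.range P = Fintype.linearCombination ℝ P ''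
      Set.range fun i j : ι => if i = j then (1 : ℝ) else 0 := by
    rw [← Set.range_comp]; congr 1; ext i; simp [Fintype.linearCombination_apply]
  rw [hP, ← LinearMap.image_convexHull, convexHull_basis_eq_stdSimplex] at hq
  obtain ⟨w, hw, rfl⟩ := hq
  exact ⟨w, hw, by simp [Fintype.linearCombination_apply]⟩

def triangleBoundary (p₁ p₂ p₃ : E) : Set E :=
  segment ℝ p₁ p₂ ∪ segment ℝ p₂ p₃ ∪ segment ℝ p₁ p₃

lemma sum_smul_mem_triangleBoundary {w : Fin 3 → ℝ} (hw : w ∈ stdSimplex ℝ (Fin 3)) {k : Fin 3}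
    (hk : w k = 0) (p₁ p₂ p₃ : E) : ∑ i, w i • ![p₁, p₂, p₃] i ∈ triangleBoundary p₁ p₂ p₃ := by
  obtain ⟨hw₀, hw₁⟩ := hw
  simp only [Fin.sum_univ_three] at hw₁ ⊢
  fin_cases k
  · exact Or.inl (Or.inr ⟨w 1, w 2, hw₀ 1, hw₀ 2, by simp_all, by simp_all⟩)
  · exact Or.inr ⟨w 0, w 2, hw₀ 0, hw₀ 2, by simp_all, by simp_all⟩
  · exact Or.inl (Or.inl ⟨w 0, w 1, hw₀ 0, hw₀ 1, by simp_all, by simp_all⟩)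

lemma exists_chord_of_mem_convexHull (φ : E →ₗ[ℝ] ℝ) {p₁ p₂ p₃ q : E}
    (hq : q ∈ convexHull ℝ {p₁, p₂, p₃}) :
    ∃ r ∈ triangleBoundary p₁ p₂ p₃, ∃ s ∈ triangleBoundary p₁ p₂ p₃,
      φ r = φ s ∧ q ∈ segment ℝ r s := by
  let L := Fintype.linearCombination ℝ ![p₁, p₂, p₃]
  have hL (w : Fin 3 → ℝ) : L w = ∑ i, w i • ![p₁, p₂, p₃] i := Fintype.linearCombination_apply ..
  have hrange : ({p₁, p₂, p₃} : Set E) = Set.range ![p₁, p₂, p₃] := by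
    rw [Matrix.range_cons, Matrix.range_cons, Matrix.range_cons_empty, Set.singleton_union,
      Set.singleton_union]
  rw [hrange] at hq
  obtain ⟨w, hw, rfl⟩ := exists_mem_stdSimplex_sum_smul_eq hq
  obtain ⟨d, hd, hdsum, hdφ⟩ := exists_ne_zero_sum_eq_zero_map_eq_zero (by simp) (φ ∘ₗ L)
  obtain ⟨t, ht, htw, k, hk⟩ := exists_add_smul_mem_stdSimplex_eq_zero hw hdsum hd
  obtain ⟨t', ht', ht'w, k', hk'⟩ := exists_add_smul_mem_stdSimplex_eq_zero hw
    (by simp [hdsum]) (neg_ne_zero.2 hd)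
  simp only [LinearMap.comp_apply] at hdφ
  refine ⟨L (w + t • d), by rw [hL]; exact sum_smul_mem_triangleBoundary htw hk _ _ _,
    L (w + t' • -d), by rw [hL]; exact sum_smul_mem_triangleBoundary ht'w hk' _ _ _,
    by simp [hdφ], ?_⟩
  rw [← hL, mem_segment_iff_sameRay]
  simpa using (SameRay.sameRay_nonneg_smul_left (R := ℝ) (-L d) ht).nonneg_smul_right ht'

end

def saddle (q : ℝ × ℝ) : ℝ := 2 * q.1 * q.2

section

variable {ℓ : ℝ × ℝ → ℝ} {u v w : ℝ}

lemma sub_saddle_add_smul (hℓ : ∀ q : ℝ × ℝ, ℓ q = u*q.1 + v*q.2 + w) {a b : ℝ} (hab : a + b = 1)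
    (r s : ℝ × ℝ) :
    ℓ (a • r + b • s) - saddle (a • r + b • s) =
      a * (ℓ r - saddle r) + b * (ℓ s - saddle s) + a * b * saddle (r - s) := by
  obtain rfl : b = 1 - a := eq_sub_of_add_eq' hab
  simp only [hℓ, saddle, Prod.fst_add, Prod.snd_add, Prod.smul_fst, Prod.smul_snd, Prod.fst_sub,
    Prod.snd_sub, smul_eq_mul]
  ring

lemma abs_le_max_of_mem_segment {x y z : ℝ} (hz : z ∈ segment ℝ x y) : |z| ≤ max |x| |y| := by
  simpa only [Real.norm_eq_abs] using
    (convexOn_univ_norm (E := ℝ)).le_on_segment (Set.mem_univ x) (Set.mem_univ y) hz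

lemma abs_sub_saddle_le_of_mem_segment_of_snd_eq (hℓ : ∀ q : ℝ × ℝ, ℓ q = u*q.1 + v*q.2 + w)
    {q r s : ℝ × ℝ} (hrs : r.2 = s.2) (hq : q ∈ segment ℝ r s) :
    |ℓ q - saddle q| ≤ max |ℓ r - saddle r| |ℓ s - saddle s| := by
  obtain ⟨a, b, ha, hb, hab, rfl⟩ := hq
  have hflat : saddle (r - s) = 0 := by simp [saddle, hrs]
  rw [sub_saddle_add_smul hℓ hab, hflat, mul_zero, add_zero]
  exact abs_le_max_of_mem_segment ⟨a, b, ha, hb, hab, rfl⟩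

lemma abs_sub_saddle_le_of_mem_segment (hℓ : ∀ q : ℝ × ℝ, ℓ q = u*q.1 + v*q.2 + w) {Δz : ℝ}
    {p p' r : ℝ × ℝ} (hp : ℓ p - saddle p = Δz) (hp' : ℓ p' - saddle p' = Δz)
    (hr : r ∈ segment ℝ p p') :
    |ℓ r - saddle r| ≤ max |Δz| |Δz + (p.1 - p'.1) * (p.2 - p'.2) / 2| := by
  obtain ⟨a, b, ha, hb, hab, rfl⟩ := hr
  rw [sub_saddle_add_smul hℓ hab, hp, hp']
  refine abs_le_max_of_mem_segment ⟨1 - 4 * (a * b), 4 * (a * b), ?_, by positivity, by ring, ?_⟩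
  · nlinarith [sq_nonneg (a - b)]
  · simp only [saddle, Prod.fst_sub, Prod.snd_sub, smul_eq_mul]
    linear_combination -Δz * hab

lemma sub_saddle_midpoint (hℓ : ∀ q : ℝ × ℝ, ℓ q = u*q.1 + v*q.2 + w) {Δz : ℝ}
    {p p' : ℝ × ℝ} (hp : ℓ p - saddle p = Δz) (hp' : ℓ p' - saddle p' = Δz) :
    ℓ ((1/2 : ℝ) • p + (1/2 : ℝ) • p') - saddle ((1/2 : ℝ) • p + (1/2 : ℝ) • p') =
      Δz + (p.1 - p'.1) * (p.2 - p'.2) / 2 := by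
  rw [sub_saddle_add_smul hℓ (by norm_num), hp, hp']
  simp only [saddle, Prod.fst_sub, Prod.snd_sub]
  ring

lemma abs_sub_saddle_le_of_mem_triangleBoundary (hℓ : ∀ q : ℝ × ℝ, ℓ q = u*q.1 + v*q.2 + w)
    {Δz : ℝ} {p₁ p₂ p₃ r : ℝ × ℝ} (e₁ : ℓ p₁ - saddle p₁ = Δz) (e₂ : ℓ p₂ - saddle p₂ = Δz)
    (e₃ : ℓ p₃ - saddle p₃ = Δz) (hr : r ∈ triangleBoundary p₁ p₂ p₃) :
    |ℓ r - saddle r| ≤ max (max |Δz| |Δz + (p₁.1-p₂.1)*(p₁.2-p₂.2)/2|)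
      (max |Δz + (p₂.1-p₃.1)*(p₂.2-p₃.2)/2| |Δz + (p₁.1-p₃.1)*(p₁.2-p₃.2)/2|) := by
  rcases hr with (hr | hr) | hr
  · exact (abs_sub_saddle_le_of_mem_segment hℓ e₁ e₂ hr).trans (le_max_left _ _)
  · exact (abs_sub_saddle_le_of_mem_segment hℓ e₂ e₃ hr).trans
      (max_le (le_max_of_le_left (le_max_left _ _)) (le_max_of_le_right (le_max_left _ _)))
  · exact (abs_sub_saddle_le_of_mem_segment hℓ e₁ e₃ hr).trans
      (max_le (le_max_of_le_left (le_max_left _ _)) (le_max_of_le_right (le_max_right _ _)))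

end

/-- For the saddle f(x,y) = 2xy and the affine function ℓ with common vertical offset
Δz at the three vertices, the maximal vertical error over the triangle equals
max { |Δz| , |Δz + (xᵢ-xⱼ)(yᵢ-yⱼ)/2| over the edges }. -/
theorem stmt_5 (Δz : ℝ) (p₁ p₂ p₃ : ℝ × ℝ) (ℓ : ℝ × ℝ → ℝ) (u v w : ℝ)
    (hℓ : ∀ q : ℝ × ℝ, ℓ q = u*q.1 + v*q.2 + w)
    (h₁ : ℓ p₁ = 2*p₁.1*p₁.2 + Δz) (h₂ : ℓ p₂ = 2*p₂.1*p₂.2 + Δz)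
    (h₃ : ℓ p₃ = 2*p₃.1*p₃.2 + Δz) :
    IsGreatest {E : ℝ | ∃ q ∈ convexHull ℝ ({p₁, p₂, p₃} : Set (ℝ × ℝ)),
        E = |ℓ q - 2*q.1*q.2|}
      (max (max |Δz| |Δz + (p₁.1-p₂.1)*(p₁.2-p₂.2)/2|)
        (max |Δz + (p₂.1-p₃.1)*(p₂.2-p₃.2)/2| |Δz + (p₁.1-p₃.1)*(p₁.2-p₃.2)/2|)) := by
  have e₁ : ℓ p₁ - saddle p₁ = Δz := by rw [h₁, saddle]; ring
  have e₂ : ℓ p₂ - saddle p₂ = Δz := by rw [h₂, saddle]; ring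
  have e₃ : ℓ p₃ - saddle p₃ = Δz := by rw [h₃, saddle]; ring
  set T := convexHull ℝ ({p₁, p₂, p₃} : Set (ℝ × ℝ))
  set S := {E : ℝ | ∃ q ∈ T, E = |ℓ q - 2*q.1*q.2|}
  have hp₁ : p₁ ∈ T := subset_convexHull ℝ _ (by simp)
  have hp₂ : p₂ ∈ T := subset_convexHull ℝ _ (by simp)
  have hp₃ : p₃ ∈ T := subset_convexHull ℝ _ (by simp)
  have hvertex : |Δz| ∈ S := ⟨p₁, hp₁, by rw [← e₁]; rfl⟩
  have hmid {p p' : ℝ × ℝ} (hp : p ∈ T) (hp' : p' ∈ T) (e : ℓ p - saddle p = Δz)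
      (e' : ℓ p' - saddle p' = Δz) : |Δz + (p.1 - p'.1) * (p.2 - p'.2) / 2| ∈ S :=
    ⟨_, (convex_convexHull ℝ _).segment_subset hp hp'
      ⟨1/2, 1/2, by norm_num, by norm_num, by norm_num, rfl⟩,
      by rw [← sub_saddle_midpoint hℓ e e']; rfl⟩
  refine ⟨max_rec' S (max_rec' S hvertex (hmid hp₁ hp₂ e₁ e₂))
    (max_rec' S (hmid hp₂ hp₃ e₂ e₃) (hmid hp₁ hp₃ e₁ e₃)), ?_⟩
  rintro _ ⟨q, hq, rfl⟩
  obtain ⟨r, hr, s, hs, hrs, hqrs⟩ := exists_chord_of_mem_convexHull (LinearMap.snd ℝ ℝ ℝ) hq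
  exact (abs_sub_saddle_le_of_mem_segment_of_snd_eq hℓ hrs hqrs).trans
    (max_le (abs_sub_saddle_le_of_mem_triangleBoundary hℓ e₁ e₂ e₃ hr)
      (abs_sub_saddle_le_of_mem_triangleBoundary hℓ e₁ e₂ e₃ hs))
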